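/- arXiv:1703.02199 — 2 statements merged into one kernel-verified Lean document; each statement's English description precedes it below -/
import Mathlib

section
/- Let (T,g) be a closure pair for a based space (𝕋,t₀) and (T',g') a closure pair for a based space (𝕋',t₀'). The following are equivalent: (1) g' ∈ cl_{T,g}(T'), the (T,g)-closure of T' in π₁(𝕋',t₀'); (2) for every based space (X,x₀) and every subgroup H ≤ π₁(X,x₀), if H is (T,g)-closed then H is (T',g')-closed; (3) for every based space (X,x₀) and every subgroup H ≤ π₁(X,x₀), cl_{T',g'}(H) ≤ cl_{T,g}(H). -/
/-!
Pulling a `(T,g)`-closed subgroup back along the homomorphism induced by a based map gives a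
`(T,g)`-closed subgroup again, since induced homomorphisms are functorial. So if `f : 𝕋' → X`
maps `T'` into a `(T,g)`-closed `H`, the pull-back of `H` contains `T'`, hence its closure, hence
`g'`: this is (1) ⇒ (2). Applying (2) to the closed subgroup `cl_{T,g}(H)` gives (3), and (3)
applied to `T'` itself gives (1), because `g'` lies in `cl_{T',g'}(T')` (test with the identity).
-/

open CategoryTheory

noncomputable section

universe u

attribute [local instance] Path.Homotopic.setoid

/-- The element of the fundamental group determined by a loop. -/
def loopClass {X : Type u} [TopologicalSpace X] {x : X} (γ : Path x x) :
    FundamentalGroup X x :=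
  FundamentalGroup.fromPath (X := TopCat.of X) ⟦γ⟧

/-- The homomorphism on fundamental groups induced by a based continuous map. -/
def inducedHom {X Y : Type u} [TopologicalSpace X] [TopologicalSpace Y]
    (f : C(X, Y)) (x : X) {y : Y} (h : f x = y) :
    FundamentalGroup X x →* FundamentalGroup Y y := by
  subst h
  exact (FundamentalGroupoid.fundamentalGroupoidFunctor.map
    (X := TopCat.of X) (Y := TopCat.of Y) (TopCat.ofHom f)).mapEnd ⟨x⟩

/-- Change of basepoint along a path, as an isomorphism of fundamental groups. -/
def pathConjEquiv {X : Type u} [TopologicalSpace X] {x y : X} (α : Path x y) :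
    FundamentalGroup X x ≃* FundamentalGroup X y :=
  FundamentalGroup.fundamentalGroupMulEquivOfPath α

/-- The path-conjugate subgroup `H^α = [α⁻]·H·[α]` of `π₁(X, α 1)`. -/
def conjSubgroup {X : Type u} [TopologicalSpace X] {x y : X} (α : Path x y)
    (H : Subgroup (FundamentalGroup X x)) : Subgroup (FundamentalGroup X y) :=
  H.map (pathConjEquiv α).toMonoidHom

/-- A subgroup `H ≤ π₁(X,x₀)` is `(T,g)`-closed for the closure pair `(T,g)` on the
based test space `(𝕋,t₀)` if for every continuous map `f : 𝕋 → X` with `f t₀ = x₀`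
and `f#(T) ≤ H` one has `f#(g) ∈ H`. -/
def IsTGClosed {T : Type u} [TopologicalSpace T] (t₀ : T)
    (Tsub : Subgroup (FundamentalGroup T t₀)) (g : FundamentalGroup T t₀)
    {X : Type u} [TopologicalSpace X] (x₀ : X)
    (H : Subgroup (FundamentalGroup X x₀)) : Prop :=
  ∀ (f : C(T, X)) (hf : f t₀ = x₀),
    Subgroup.map (inducedHom f t₀ hf) Tsub ≤ H → inducedHom f t₀ hf g ∈ H

/-- The `(T,g)`-closure of a subgroup `H ≤ π₁(X,x₀)`: the intersection of all
`(T,g)`-closed subgroups of `π₁(X,x₀)` containing `H`. -/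
def tgClosure {T : Type u} [TopologicalSpace T] (t₀ : T)
    (Tsub : Subgroup (FundamentalGroup T t₀)) (g : FundamentalGroup T t₀)
    {X : Type u} [TopologicalSpace X] (x₀ : X)
    (H : Subgroup (FundamentalGroup X x₀)) : Subgroup (FundamentalGroup X x₀) :=
  sInf {K : Subgroup (FundamentalGroup X x₀) | IsTGClosed t₀ Tsub g x₀ K ∧ H ≤ K}

section InducedHom

variable {X Y Z : Type u} [TopologicalSpace X] [TopologicalSpace Y] [TopologicalSpace Z]

theorem inducedHom_id (x : X) (h : ContinuousMap.id X x = x) :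
    inducedHom (ContinuousMap.id X) x h = MonoidHom.id (FundamentalGroup X x) :=
  MonoidHom.ext fun a => Quotient.inductionOn a fun _ => rfl

theorem inducedHom_comp_apply (f : C(X, Y)) (g : C(Y, Z)) (x : X) {y : Y} {z : Z}
    (hf : f x = y) (hg : g y = z) (hgf : g.comp f x = z) (a : FundamentalGroup X x) :
    inducedHom g y hg (inducedHom f x hf a) = inducedHom (g.comp f) x hgf a := by
  subst hf hg
  exact Quotient.inductionOn a fun _ => rfl

end InducedHom

section Closure

variable {T : Type u} [TopologicalSpace T] {t₀ : T}
  {Tsub : Subgroup (FundamentalGroup T t₀)} {g : FundamentalGroup T t₀}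
  {X : Type u} [TopologicalSpace X] {x₀ : X}

theorem le_tgClosure (H : Subgroup (FundamentalGroup X x₀)) :
    H ≤ tgClosure t₀ Tsub g x₀ H :=
  le_sInf fun _ hK => hK.2

theorem tgClosure_le {H K : Subgroup (FundamentalGroup X x₀)}
    (hK : IsTGClosed t₀ Tsub g x₀ K) (hHK : H ≤ K) : tgClosure t₀ Tsub g x₀ H ≤ K :=
  sInf_le ⟨hK, hHK⟩

theorem isTGClosed_tgClosure (H : Subgroup (FundamentalGroup X x₀)) :
    IsTGClosed t₀ Tsub g x₀ (tgClosure t₀ Tsub g x₀ H) :=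
  fun f hf hsub => Subgroup.mem_sInf.2 fun _ hK => hK.1 f hf (hsub.trans (sInf_le hK))

theorem mem_tgClosure_self : g ∈ tgClosure t₀ Tsub g t₀ Tsub :=
  Subgroup.mem_sInf.2 fun K ⟨hK, hle⟩ => by
    have := hK (ContinuousMap.id T) rfl
    rw [inducedHom_id t₀ rfl, Subgroup.map_id] at this
    exact this hle

theorem IsTGClosed.comap {H : Subgroup (FundamentalGroup X x₀)}
    (hH : IsTGClosed t₀ Tsub g x₀ H) {Y : Type u} [TopologicalSpace Y] (f : C(Y, X)) (y₀ : Y)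
    (hf : f y₀ = x₀) : IsTGClosed t₀ Tsub g y₀ (H.comap (inducedHom f y₀ hf)) := by
  intro φ hφ hsub
  have hfφ : f.comp φ t₀ = x₀ := by rw [ContinuousMap.comp_apply, hφ, hf]
  have hmap : Tsub.map (inducedHom (f.comp φ) t₀ hfφ) ≤ H := by
    rintro _ ⟨b, hb, rfl⟩
    rw [← inducedHom_comp_apply φ f t₀ hφ hf hfφ]
    exact hsub ⟨b, hb, rfl⟩
  rw [Subgroup.mem_comap, inducedHom_comp_apply φ f t₀ hφ hf hfφ]
  exact hH _ hfφ hmap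

end Closure

theorem stmt1 {T : Type u} [TopologicalSpace T] (t₀ : T)
    (Tsub : Subgroup (FundamentalGroup T t₀)) (g : FundamentalGroup T t₀)
    {T' : Type u} [TopologicalSpace T'] (t₀' : T')
    (Tsub' : Subgroup (FundamentalGroup T' t₀')) (g' : FundamentalGroup T' t₀') :
    List.TFAE
      [ g' ∈ tgClosure t₀ Tsub g t₀' Tsub',
        ∀ (X : Type u) [TopologicalSpace X] (x₀ : X)
          (H : Subgroup (FundamentalGroup X x₀)),
          IsTGClosed t₀ Tsub g x₀ H → IsTGClosed t₀' Tsub' g' x₀ H,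
        ∀ (X : Type u) [TopologicalSpace X] (x₀ : X)
          (H : Subgroup (FundamentalGroup X x₀)),
          tgClosure t₀' Tsub' g' x₀ H ≤ tgClosure t₀ Tsub g x₀ H ] := by
  tfae_have 1 → 2 := fun h1 X _ x₀ H hH f hf hsub =>
    tgClosure_le (hH.comap f t₀' hf) (Subgroup.map_le_iff_le_comap.1 hsub) h1
  tfae_have 2 → 3 := fun h2 X _ x₀ H =>
    tgClosure_le (h2 X x₀ _ (isTGClosed_tgClosure H)) (le_tgClosure H)
  tfae_have 3 → 1 := fun h3 => h3 T' t₀' Tsub' mem_tgClosure_self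
  tfae_finish
end
end

section
/- Suppose the based space (𝕋,t₀) is well-pointed in the following sense: for every topological space X, every continuous map f : 𝕋 → X, and every path α : [0,1] → X with α(0) = f(t₀), there is a homotopy G : 𝕋 × [0,1] → X with G(d,0) = f(d) for all d ∈ 𝕋 and G(t₀,s) = α(s) for all s ∈ [0,1]. Then every closure pair (T,g) for (𝕋,t₀) is a normal closure pair. -/
/-! Well-pointedness lets us push a based map `f : (𝕋, t₀) → (X, x)` along a homotopy whose
basepoint track is `α⁻`, giving a map `f₁` based at `x₀`. Along a homotopy the induced
homomorphisms differ by conjugation with the track, so `f₁# = [α]·f#·[α⁻]`, and the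
`(T,g)`-closedness of `H` at `x₀` transfers to `H^α` at `x`. The converse uses the constant
path. -/

open CategoryTheory

noncomputable section

universe u

attribute [local instance] Path.Homotopic.setoid

/-- A closure pair `(T,g)` is normal if, for every based space `(X,x₀)` and every
subgroup `H ≤ π₁(X,x₀)`, `H` is `(T,g)`-closed if and only if all of its path-conjugates
`H^α` are `(T,g)`-closed. -/
def IsNormalClosurePair {T : Type u} [TopologicalSpace T] (t₀ : T)
    (Tsub : Subgroup (FundamentalGroup T t₀)) (g : FundamentalGroup T t₀) : Prop :=
  ∀ (X : Type u) [TopologicalSpace X] (x₀ : X) (H : Subgroup (FundamentalGroup X x₀)),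
    IsTGClosed t₀ Tsub g x₀ H ↔
      ∀ (x : X) (α : Path x₀ x), IsTGClosed t₀ Tsub g x (conjSubgroup α H)

def IsWellPointed {T : Type u} [TopologicalSpace T] (t₀ : T) : Prop :=
  ∀ (X : Type u) [TopologicalSpace X] (f : C(T, X)) (y : X) (α : Path (f t₀) y),
    ∃ G : C(T × unitInterval, X),
      (∀ d : T, G (d, 0) = f d) ∧ (∀ s : unitInterval, G (t₀, s) = α s)

section
variable {T X : Type u} [TopologicalSpace T] [TopologicalSpace X]

lemma pathConjEquiv_symm {x y : X} (α : Path x y) :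
    pathConjEquiv α.symm = (pathConjEquiv α).symm := by
  have hiso : (Groupoid.isoEquivHom _ _).symm ⟦α.symm⟧ =
      ((Groupoid.isoEquivHom (FundamentalGroupoid.mk x)
        (FundamentalGroupoid.mk y)).symm ⟦α⟧).symm :=
    Iso.ext rfl
  ext A
  rw [MulEquiv.eq_symm_apply]
  show (Iso.conj _) ((Iso.conj _) A) = A
  rw [hiso]
  exact Iso.self_symm_conj _ A

lemma pathConjEquiv_refl (x : X) : pathConjEquiv (Path.refl x) = MulEquiv.refl _ := by
  have hiso : (Groupoid.isoEquivHom _ _).symm ⟦Path.refl x⟧ =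
      Iso.refl (FundamentalGroupoid.mk x) :=
    Iso.ext rfl
  ext A
  show (Iso.conj _) A = A
  rw [hiso]
  exact Iso.refl_conj A

lemma conjSubgroup_refl {x : X} (H : Subgroup (FundamentalGroup X x)) :
    conjSubgroup (Path.refl x) H = H := by
  simp [conjSubgroup, pathConjEquiv_refl]

lemma mem_conjSubgroup_iff {x y : X} (α : Path x y) (H : Subgroup (FundamentalGroup X x))
    (A : FundamentalGroup X y) : A ∈ conjSubgroup α H ↔ pathConjEquiv α.symm A ∈ H := by
  rw [pathConjEquiv_symm]
  exact Subgroup.mem_map_equiv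

open FundamentalGroupoid in
lemma inducedHom_apply_of_homotopy {t₀ : T} {f₀ f₁ : C(T, X)} (F : f₀.Homotopy f₁)
    {x₀ x₁ : X} (h₀ : f₀ t₀ = x₀) (h₁ : f₁ t₀ = x₁) (β : Path x₀ x₁)
    (hβ : ∀ s, F (s, t₀) = β s) (γ : FundamentalGroup T t₀) :
    inducedHom f₁ t₀ h₁ γ = pathConjEquiv β (inducedHom f₀ t₀ h₀ γ) := by
  subst h₀ h₁
  have htrack : F.evalAt t₀ = β := Path.ext (funext hβ)
  obtain ⟨h_left, h_right⟩ := ContinuousMap.Homotopy.eq_diag_path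
    (X := TopCat.of T) (Y := TopCat.of X) F (γ : @fromTop (TopCat.of T) t₀ ⟶ fromTop t₀)
  rw [htrack] at h_left h_right
  have conj_of_comm {a b : FundamentalGroupoid X} (p : a ⟶ b) (A : a ⟶ a) (B : b ⟶ b)
      (h : A ≫ p = p ≫ B) : B = Groupoid.inv p ≫ A ≫ p := by
    rw [Groupoid.inv_eq_inv, eq_comm, IsIso.inv_comp_eq, h]
  exact conj_of_comm _ _ _ (h_left.trans h_right.symm)

lemma IsWellPointed.exists_homotopy {t₀ : T} (hT : IsWellPointed t₀) (f : C(T, X)) {y : X}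
    (α : Path (f t₀) y) :
    ∃ (f₁ : C(T, X)) (F : f.Homotopy f₁), ∀ s, F (s, t₀) = α s := by
  obtain ⟨G, hG₀, hGt₀⟩ := hT X f y α
  let F : f.Homotopy ⟨fun d => G (d, 1), by fun_prop⟩ :=
    { toFun := fun p => G (p.2, p.1)
      map_zero_left := hG₀
      map_one_left := fun _ => rfl }
  exact ⟨_, F, hGt₀⟩

lemma IsTGClosed.conjSubgroup {t₀ : T} (hT : IsWellPointed t₀)
    {Tsub : Subgroup (FundamentalGroup T t₀)} {g : FundamentalGroup T t₀} {x₀ x : X}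
    {H : Subgroup (FundamentalGroup X x₀)} (hH : IsTGClosed t₀ Tsub g x₀ H)
    (α : Path x₀ x) :
    IsTGClosed t₀ Tsub g x (conjSubgroup α H) := by
  intro f hf hTH
  subst hf
  obtain ⟨f₁, F, hF⟩ := hT.exists_homotopy f α.symm
  have hf₁ : f₁ t₀ = x₀ := by rw [← F.apply_one, hF, Path.target]
  have hinduced := inducedHom_apply_of_homotopy F rfl hf₁ α.symm hF
  have hTH₁ : Subgroup.map (inducedHom f₁ t₀ hf₁) Tsub ≤ H := by
    rintro _ ⟨γ, hγ, rfl⟩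
    rw [hinduced, ← mem_conjSubgroup_iff]
    exact hTH ⟨γ, hγ, rfl⟩
  rw [mem_conjSubgroup_iff, ← hinduced]
  exact hH f₁ hf₁ hTH₁

end

theorem stmt3 {T : Type u} [TopologicalSpace T] (t₀ : T)
    (hwellpointed : ∀ (X : Type u) [TopologicalSpace X] (f : C(T, X)) (y : X)
      (α : Path (f t₀) y), ∃ G : C(T × unitInterval, X),
        (∀ d : T, G (d, 0) = f d) ∧ (∀ s : unitInterval, G (t₀, s) = α s))
    (Tsub : Subgroup (FundamentalGroup T t₀)) (g : FundamentalGroup T t₀) :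
    IsNormalClosurePair t₀ Tsub g := by
  intro X _ x₀ H
  refine ⟨fun hH x α => hH.conjSubgroup hwellpointed α, fun hconj => ?_⟩
  simpa only [conjSubgroup_refl] using hconj x₀ (Path.refl x₀)
end
end
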